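/- Let G be a finite abelian group of exponent q, let F be a perfect field whose characteristic does not divide q, and let ρ : G → GL_n(F) be any representation of G on V = F^n. Then there exists a nonzero homogeneous polynomial in F[x_1,…,x_n] of degree d with 0 < d ≤ q that is invariant under ρ(G); i.e. M_{ρ(G),V} ≤ q. -/
import Mathlib
open MvPolynomial Matrix

/-- The action of `g ∈ GL_n(F)` on polynomials: `(g · f)(v) = f(g⁻¹ v)`. -/
noncomputable def glAct {n : ℕ} {F : Type} [Field F] (g : GL (Fin n) F)
    (f : MvPolynomial (Fin n) F) : MvPolynomial (Fin n) F :=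
  aeval (fun i => ∑ j, ((g⁻¹ : GL (Fin n) F) : Matrix (Fin n) (Fin n) F) i j • X j) f

section lemmas
variable {n : ℕ} {F : Type} [Field F]


lemma glAct_add (g : GL (Fin n) F) (f₁ f₂ : MvPolynomial (Fin n) F) :
    glAct g (f₁ + f₂) = glAct g f₁ + glAct g f₂ := map_add (aeval _ : MvPolynomial (Fin n) F →ₐ[F] _) _ _

lemma glAct_mul (g : GL (Fin n) F) (f₁ f₂ : MvPolynomial (Fin n) F) :
    glAct g (f₁ * f₂) = glAct g f₁ * glAct g f₂ := map_mul (aeval _ : MvPolynomial (Fin n) F →ₐ[F] _) _ _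

lemma glAct_X (g : GL (Fin n) F) (i : Fin n) :
    glAct g (X i) = ∑ j, ((g⁻¹ : GL (Fin n) F) : Matrix (Fin n) (Fin n) F) i j • X j := by
  simp [glAct]

lemma glAct_map {K : Type} [Field K] (φ : F →+* K) (g : GL (Fin n) F)
    (f : MvPolynomial (Fin n) F) :
    glAct (Units.map φ.mapMatrix.toMonoidHom g) (MvPolynomial.map φ f)
      = MvPolynomial.map φ (glAct g f) := by
  induction f using MvPolynomial.induction_on with
  | C a => simp [glAct, aeval_C, algebraMap_eq]
  | add p q hp hq => rw [map_add, glAct_add, glAct_add, hp, hq, map_add]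
  | mul_X p i hp =>
    rw [_root_.map_mul, glAct_mul, glAct_mul, hp, _root_.map_mul]
    congr 1
    have hginv : (((Units.map φ.mapMatrix.toMonoidHom g)⁻¹ : GL (Fin n) K) : Matrix (Fin n) (Fin n) K)
        = ((g⁻¹ : GL (Fin n) F) : Matrix (Fin n) (Fin n) F).map φ := by
      rw [← map_inv (Units.map φ.mapMatrix.toMonoidHom :
        (Matrix (Fin n) (Fin n) F)ˣ →* (Matrix (Fin n) (Fin n) K)ˣ) g]
      simp [RingHom.mapMatrix_apply]
    rw [map_X, glAct_X, glAct_X, map_sum]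
    congr 1
    funext j
    rw [smul_eq_C_mul, smul_eq_C_mul, _root_.map_mul, map_C, map_X, hginv]
    rfl

lemma glAct_smul (g : GL (Fin n) F) (a : F) (f : MvPolynomial (Fin n) F) :
    glAct g (a • f) = a • glAct g f := map_smul (aeval _ : MvPolynomial (Fin n) F →ₐ[F] _) _ _

lemma glAct_sum {ι : Type*} (g : GL (Fin n) F) (s : Finset ι) (f : ι → MvPolynomial (Fin n) F) :
    glAct g (∑ i ∈ s, f i) = ∑ i ∈ s, glAct g (f i) :=
  map_sum (aeval _ : MvPolynomial (Fin n) F →ₐ[F] _) _ _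

lemma glAct_pow (g : GL (Fin n) F) (f : MvPolynomial (Fin n) F) (k : ℕ) :
    glAct g (f ^ k) = glAct g f ^ k := map_pow (aeval _ : MvPolynomial (Fin n) F →ₐ[F] _) _ _

lemma glAct_isHomogeneous (g : GL (Fin n) F) {f : MvPolynomial (Fin n) F} {d : ℕ}
    (hf : f.IsHomogeneous d) : (glAct g f).IsHomogeneous d := by
  have h1 : ∀ i, ((fun i => ∑ j, ((g⁻¹ : GL (Fin n) F) : Matrix (Fin n) (Fin n) F) i j • X j) i : MvPolynomial (Fin n) F).IsHomogeneous 1 := by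
    intro i
    apply IsHomogeneous.sum
    intro j _
    rw [smul_eq_C_mul]
    exact (isHomogeneous_X _ _).C_mul _
  have := hf.aeval _ h1
  simpa [glAct] using this

lemma glAct_comp (g h : GL (Fin n) F) (f : MvPolynomial (Fin n) F) :
    glAct (g * h) f = glAct g (glAct h f) := by
  unfold glAct
  have key : (fun i => ∑ j, (((g * h)⁻¹ : GL (Fin n) F) : Matrix (Fin n) (Fin n) F) i j • (X j : MvPolynomial (Fin n) F))
      = fun i => aeval (fun i' => ∑ j, ((g⁻¹ : GL (Fin n) F) : Matrix (Fin n) (Fin n) F) i' j • (X j : MvPolynomial (Fin n) F))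
          (∑ j, ((h⁻¹ : GL (Fin n) F) : Matrix (Fin n) (Fin n) F) i j • (X j : MvPolynomial (Fin n) F)) := by
    funext i
    simp only [map_sum, _root_.map_smul, aeval_X, _root_.mul_inv_rev, Units.val_mul, Matrix.mul_apply,
      Finset.sum_smul, Finset.smul_sum, smul_smul]
    exact Finset.sum_comm
  rw [key, ← MvPolynomial.comp_aeval]
  rfl

end lemmas

lemma common_eigenvector {K V : Type*} [Field K] [IsAlgClosed K] [AddCommGroup V] [Module K V]
    [FiniteDimensional K V] {ι : Type*} (T : ι → Module.End K V)
    (hcomm : ∀ i j, Commute (T i) (T j)) (s : Finset ι) :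
    ∀ (p : Submodule K V), p ≠ ⊥ → (∀ i, ∀ v ∈ p, T i v ∈ p) →
      ∃ v ∈ p, v ≠ 0 ∧ ∀ i ∈ s, ∃ μ : K, T i v = μ • v := by
  classical
  induction s using Finset.induction_on with
  | empty =>
    intro p hp hinv
    obtain ⟨v, hv, hv0⟩ := Submodule.exists_mem_ne_zero_of_ne_bot hp
    exact ⟨v, hv, hv0, by simp⟩
  | @insert a s ha ih =>
    intro p hp hinv
    haveI : Nontrivial p := Submodule.nontrivial_iff_ne_bot.mpr hp
    have hmap : ∀ v ∈ p, T a v ∈ p := hinv a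
    obtain ⟨μ, hμ⟩ := Module.End.exists_eigenvalue ((T a).restrict hmap)
    obtain ⟨w, hw⟩ := hμ.exists_hasEigenvector
    have hweq : T a (w : V) = μ • (w : V) := by
      have := hw.apply_eq_smul
      have h2 := congrArg (Subtype.val) this
      simpa [LinearMap.restrict_apply] using h2
    set p' := p ⊓ Module.End.eigenspace (T a) μ with hp'def
    have hwp' : (w : V) ∈ p' := ⟨w.2, Module.End.mem_eigenspace_iff.mpr hweq⟩
    have hp' : p' ≠ ⊥ := by
      intro hbot
      have : (w : V) = 0 := by rw [hbot] at hwp'; simpa using hwp'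
      exact hw.right (by ext; simp [this])
    have hinv' : ∀ i, ∀ v ∈ p', T i v ∈ p' := by
      intro i v hv
      refine ⟨hinv i v hv.1, Module.End.mem_eigenspace_iff.mpr ?_⟩
      have hva : T a v = μ • v := Module.End.mem_eigenspace_iff.mp hv.2
      have hc : T a (T i v) = T i (T a v) := by
        have := (hcomm i a).symm
        exact LinearMap.congr_fun this v
      rw [hc, hva, _root_.map_smul]
    obtain ⟨v, hvp', hv0, hvs⟩ := ih p' hp' hinv'
    refine ⟨v, hvp'.1, hv0, ?_⟩
    intro i hi
    rcases Finset.mem_insert.mp hi with h | h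
    · exact ⟨μ, by rw [h]; exact Module.End.mem_eigenspace_iff.mp hvp'.2⟩
    · exact hvs i h

/-- If `G` is a finite abelian group of exponent `q`, `F` a perfect field with
`char F ∤ q`, and `ρ : G → GL_n(F)` any representation, then there is a nonzero
homogeneous `ρ(G)`-invariant polynomial of degree `d` with `0 < d ≤ q`. -/
theorem stmt7 {n : ℕ} {F : Type} [Field F] [PerfectField F]
    (G : Type) [CommGroup G] [Finite G]
    (hchar : ¬ (ringChar F ∣ Monoid.exponent G))
    (ρ : G →* GL (Fin n) F) (hn : 0 < n) :
    ∃ d : ℕ, 0 < d ∧ d ≤ Monoid.exponent G ∧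
      ∃ f : MvPolynomial (Fin n) F, f ≠ 0 ∧ f.IsHomogeneous d ∧
        ∀ g : G, glAct (ρ g) f = f := by
  classical
  haveI := Fintype.ofFinite G
  set q := Monoid.exponent G with hqdef
  have hq : 0 < q := Monoid.ExponentExists.of_finite.exponent_pos
  have hcardF : (Fintype.card G : F) ≠ 0 := by
    intro h0
    have hdvd : ringChar F ∣ Fintype.card G := (ringChar.spec F (Fintype.card G)).mp h0
    rcases CharP.char_is_prime_or_zero F (ringChar F) with hp | hp
    · haveI : Fact (Nat.Prime (ringChar F)) := ⟨hp⟩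
      obtain ⟨g, hg⟩ := exists_prime_orderOf_dvd_card (ringChar F) hdvd
      exact hchar (hg ▸ Monoid.order_dvd_exponent g)
    · rw [hp] at hdvd
      exact Fintype.card_pos.ne' (Nat.eq_zero_of_zero_dvd hdvd)
  set K := AlgebraicClosure F with hK
  let φ : F →+* K := algebraMap F K
  have hcardK : (Fintype.card G : K) ≠ 0 := by
    intro h0
    apply hcardF
    apply φ.injective
    rw [map_natCast, h0, map_zero]
  let ψ : GL (Fin n) F →* GL (Fin n) K := Units.map φ.mapMatrix.toMonoidHom
  let ρ' : G →* GL (Fin n) K := ψ.comp ρ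
  let σ : G → Matrix (Fin n) (Fin n) K :=
    fun g => (((ρ' g)⁻¹ : GL (Fin n) K) : Matrix (Fin n) (Fin n) K)ᵀ
  have hσmul : ∀ g h : G, σ g * σ h = σ (g * h) := by
    intro g h
    show _ = ((((ρ' (g * h))⁻¹ : GL (Fin n) K)) : Matrix (Fin n) (Fin n) K)ᵀ
    rw [_root_.map_mul, _root_.mul_inv_rev, Units.val_mul, Matrix.transpose_mul]
  have hσone : σ (1 : G) = 1 := by
    show ((((ρ' (1:G))⁻¹ : GL (Fin n) K)) : Matrix (Fin n) (Fin n) K)ᵀ = 1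
    rw [_root_.map_one, inv_one, Units.val_one, Matrix.transpose_one]
  have hσpow : ∀ g : G, σ g ^ q = 1 := by
    intro g
    have h1 : ∀ k : ℕ, σ g ^ k = σ (g ^ k) := by
      intro k
      induction k with
      | zero => rw [pow_zero, pow_zero, hσone]
      | succ k ih => rw [pow_succ, pow_succ, ih, hσmul]
    rw [h1 q, hqdef, Monoid.pow_exponent_eq_one g, hσone]
  let T : G → Module.End K (Fin n → K) := fun g => Matrix.mulVecLin (σ g)
  have hTcomm : ∀ g h : G, Commute (T g) (T h) := by
    intro g h
    have key : ∀ g h : G, T g * T h = Matrix.mulVecLin (σ g * σ h) := by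
      intro g h
      rw [Matrix.mulVecLin_mul]
      rfl
    show T g * T h = T h * T g
    rw [key, key, hσmul, hσmul, mul_comm g h]
  haveI : Nonempty (Fin n) := ⟨⟨0, hn⟩⟩
  obtain ⟨c, -, hc0, hceig⟩ := common_eigenvector T hTcomm Finset.univ ⊤
    (by simp) (fun _ _ _ => trivial)
  choose μ hμ using fun g => hceig g (Finset.mem_univ g)
  have hμc : ∀ g : G, σ g *ᵥ c = μ g • c := by
    intro g
    rw [← Matrix.mulVecLin_apply]
    exact hμ g
  have hμq : ∀ g : G, μ g ^ q = 1 := by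
    intro g
    have hk : ∀ k : ℕ, (σ g ^ k) *ᵥ c = μ g ^ k • c := by
      intro k
      induction k with
      | zero => simp [Matrix.one_mulVec]
      | succ k ih =>
        rw [pow_succ, ← Matrix.mulVec_mulVec, hμc g, Matrix.mulVec_smul, ih, pow_succ,
          mul_comm, mul_smul]
    have h1 := hk q
    rw [hσpow, Matrix.one_mulVec] at h1
    have h2 : (μ g ^ q - 1) • c = 0 := by rw [sub_smul, one_smul, ← h1, sub_self]
    rcases smul_eq_zero.mp h2 with h | h
    · exact sub_eq_zero.mp h
    · exact absurd h hc0
  -- the eigen-linear-form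
  let ℓ : MvPolynomial (Fin n) K := ∑ i, c i • X i
  have hℓeig : ∀ g : G, glAct (ρ' g) ℓ = μ g • ℓ := by
    intro g
    show glAct (ρ' g) (∑ i, c i • X i) = _
    rw [glAct_sum]
    simp only [glAct_smul, glAct_X]
    rw [show (μ g • ℓ : MvPolynomial (Fin n) K) = ∑ j, (μ g * c j) • X j by
      rw [Finset.smul_sum]; exact Finset.sum_congr rfl fun j _ => smul_smul _ _ _]
    simp only [Finset.smul_sum, smul_smul]
    rw [Finset.sum_comm]
    refine Finset.sum_congr rfl fun j _ => ?_
    rw [← Finset.sum_smul]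
    congr 1
    have h1 := congrFun (hμc g) j
    simp only [Matrix.mulVec, dotProduct, Pi.smul_apply, smul_eq_mul] at h1
    rw [← h1]
    refine Finset.sum_congr rfl fun i _ => ?_
    simp only [σ, Matrix.transpose_apply]
    ring
  have hℓq : ∀ g : G, glAct (ρ' g) (ℓ ^ q) = ℓ ^ q := by
    intro g
    rw [glAct_pow, hℓeig, smul_pow, hμq, one_smul]
  have hℓ0 : ℓ ≠ 0 := by
    have hex : ∃ i0, c i0 ≠ 0 := by
      by_contra hcon
      push_neg at hcon
      exact hc0 (funext fun i => hcon i)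
    obtain ⟨i0, hi0⟩ := hex
    intro h
    have heval : eval (fun j => if j = i0 then (1 : K) else 0) ℓ = c i0 := by
      show eval _ (∑ i, c i • X i) = c i0
      rw [map_sum]
      rw [Finset.sum_eq_single i0]
      · simp [smul_eq_C_mul]
      · intro b _ hb
        simp [smul_eq_C_mul, hb]
      · intro hni; exact absurd (Finset.mem_univ i0) hni
    rw [h, map_zero] at heval
    exact hi0 heval.symm
  have hℓq0 : ℓ ^ q ≠ 0 := pow_ne_zero _ hℓ0
  -- the averaging operator over K
  let Θ : G → (MvPolynomial (Fin n) K →ₗ[K] MvPolynomial (Fin n) K) := fun g =>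
    (aeval (fun i => ∑ j, (((ρ' g)⁻¹ : GL (Fin n) K) : Matrix (Fin n) (Fin n) K) i j • X j)
      : MvPolynomial (Fin n) K →ₐ[K] MvPolynomial (Fin n) K).toLinearMap
  have hΘ : ∀ g f, Θ g f = glAct (ρ' g) f := fun _ _ => rfl
  let Pi : MvPolynomial (Fin n) K →ₗ[K] MvPolynomial (Fin n) K := ∑ g : G, Θ g
  have hPi : ∀ f, Pi f = ∑ g : G, glAct (ρ' g) f := by
    intro f
    show (∑ g : G, Θ g) f = _
    rw [LinearMap.sum_apply]
    exact Finset.sum_congr rfl fun g _ => hΘ g f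
  have hPiℓ0 : Pi (ℓ ^ q) ≠ 0 := by
    rw [hPi]
    simp only [hℓq]
    rw [Finset.sum_const, Finset.card_univ, ← Nat.cast_smul_eq_nsmul K]
    exact smul_ne_zero hcardK hℓq0
  have hexm : ∃ m ∈ (ℓ ^ q).support, Pi ((monomial m) (1 : K)) ≠ 0 := by
    by_contra hcon
    push_neg at hcon
    apply hPiℓ0
    conv_lhs => rw [← support_sum_monomial_coeff (ℓ ^ q)]
    rw [map_sum]
    refine Finset.sum_eq_zero fun m hm => ?_
    rw [show (monomial m) (coeff m (ℓ ^ q)) = coeff m (ℓ ^ q) • (monomial m) (1 : K) by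
      rw [smul_monomial, smul_eq_mul, mul_one], _root_.map_smul, hcon m hm, smul_zero]
  obtain ⟨m, hm, hPim⟩ := hexm
  -- homogeneity info
  have hℓhom : ℓ.IsHomogeneous 1 := by
    apply IsHomogeneous.sum
    intro i _
    rw [smul_eq_C_mul]
    exact (isHomogeneous_X _ _).C_mul _
  have hℓqhom : (ℓ ^ q).IsHomogeneous q := by
    have := hℓhom.pow q
    rwa [one_mul] at this
  have hmdeg : m.degree = q := by
    rw [Finsupp.degree_eq_weight_one]
    exact hℓqhom (mem_support_iff.mp hm)
  have hmono : ((monomial m) (1 : F)).IsHomogeneous q := isHomogeneous_monomial _ hmdeg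
  -- descend to F
  have hbase : ∀ g : G, glAct (ρ' g) ((monomial m) (1 : K))
      = MvPolynomial.map φ (glAct (ρ g) ((monomial m) (1 : F))) := by
    intro g
    have h1 : ((monomial m) (1 : K)) = MvPolynomial.map φ ((monomial m) (1 : F)) := by
      rw [map_monomial, _root_.map_one φ]
    rw [h1, show ρ' g = Units.map φ.mapMatrix.toMonoidHom (ρ g) from rfl, glAct_map]
  set f : MvPolynomial (Fin n) F := ∑ g : G, glAct (ρ g) ((monomial m) (1 : F)) with hfdef
  have hf0 : f ≠ 0 := by
    intro h
    apply hPim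
    rw [hPi]
    calc ∑ g : G, glAct (ρ' g) ((monomial m) (1 : K))
        = MvPolynomial.map φ f := by
          rw [hfdef, map_sum]
          exact Finset.sum_congr rfl fun g _ => hbase g
      _ = 0 := by rw [h, map_zero]
  have hfhom : f.IsHomogeneous q :=
    IsHomogeneous.sum _ _ _ fun g _ => glAct_isHomogeneous _ hmono
  have hfinv : ∀ g : G, glAct (ρ g) f = f := by
    intro h
    rw [hfdef, glAct_sum]
    have h1 : ∀ g : G, glAct (ρ h) (glAct (ρ g) ((monomial m) (1 : F)))
        = glAct (ρ (h * g)) ((monomial m) (1 : F)) := by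
      intro g
      rw [_root_.map_mul, glAct_comp]
    simp only [h1]
    exact Fintype.sum_equiv (Equiv.mulLeft h) _ _ (fun g => rfl)
  exact ⟨q, hq, le_refl _, f, hf0, hfhom, hfinv⟩
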